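/- arXiv:math/0302332 — 2 statements merged into one kernel-verified Lean document; each statement's English description precedes it below -/
import Mathlib

section
/- If (A, m, Δ) is a finite-dimensional associative dialgebra with counit satisfying the module/Frobenius compatibility, then the bilinear form B(x,y) = ε(xy) is nondegenerate, so A is a Frobenius algebra. -/
open TensorProduct

section

variable {k A : Type*} [CommRing k] [Ring A] [Algebra k A]
  {Δ : A →ₗ[k] A ⊗[k] A} {ε : A →ₗ[k] k}

theorem eq_zero_of_counit_mul_right_eq_zero
    (hcounit_l : ∀ a : A, TensorProduct.lid k A (TensorProduct.map ε LinearMap.id (Δ a)) = a)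
    (hcompat_left : ∀ x y : A,
      Δ (x * y) = TensorProduct.map (LinearMap.mulLeft k x) LinearMap.id (Δ y))
    {x : A} (hx : ∀ y : A, ε (x * y) = 0) : x = 0 := by
  have hεx : ε ∘ₗ LinearMap.mulLeft k x = 0 := LinearMap.ext hx
  calc x = TensorProduct.lid k A (TensorProduct.map ε LinearMap.id (Δ (x * 1))) := by
          rw [mul_one, hcounit_l]
    _ = 0 := by
          rw [hcompat_left, ← LinearMap.comp_apply, ← TensorProduct.map_comp, hεx,
            TensorProduct.map_zero_left, LinearMap.zero_apply, map_zero]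

theorem eq_zero_of_counit_mul_left_eq_zero
    (hcounit_r : ∀ a : A, TensorProduct.rid k A (TensorProduct.map LinearMap.id ε (Δ a)) = a)
    (hcompat_right : ∀ x y : A,
      Δ (x * y) = TensorProduct.map LinearMap.id (LinearMap.mulRight k y) (Δ x))
    {y : A} (hy : ∀ x : A, ε (x * y) = 0) : y = 0 := by
  have hεy : ε ∘ₗ LinearMap.mulRight k y = 0 := LinearMap.ext hy
  calc y = TensorProduct.rid k A (TensorProduct.map LinearMap.id ε (Δ (1 * y))) := by
          rw [one_mul, hcounit_r]
    _ = 0 := by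
          rw [hcompat_right, ← LinearMap.comp_apply, ← TensorProduct.map_comp, hεy,
            TensorProduct.map_zero_right, LinearMap.zero_apply, map_zero]

end

theorem counital_dialgebra_is_frobenius_general
    (k : Type*) [Field k] (A : Type*) [Ring A] [Algebra k A]
    (Δ : A →ₗ[k] A ⊗[k] A)
    (ε : A →ₗ[k] k)
    (hcounit_l : ∀ a : A, (TensorProduct.lid k A) (TensorProduct.map ε LinearMap.id (Δ a)) = a)
    (hcounit_r : ∀ a : A, (TensorProduct.rid k A) (TensorProduct.map LinearMap.id ε (Δ a)) = a)
    (hcompat_left : ∀ x y : A,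
      Δ (x * y) = TensorProduct.map (LinearMap.mulLeft k x) LinearMap.id (Δ y))
    (hcompat_right : ∀ x y : A,
      Δ (x * y) = TensorProduct.map LinearMap.id (LinearMap.mulRight k y) (Δ x)) :
    (∀ x : A, (∀ y : A, ε (x * y) = 0) → x = 0) ∧
    (∀ y : A, (∀ x : A, ε (x * y) = 0) → y = 0) :=
  ⟨fun _ hx => eq_zero_of_counit_mul_right_eq_zero hcounit_l hcompat_left hx,
    fun _ hy => eq_zero_of_counit_mul_left_eq_zero hcounit_r hcompat_right hy⟩

/-- If `A` is a finite-dimensional unital associative dialgebra over a field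
`k`, with coassociative coproduct `Δ` and counit `ε`, satisfying the module/Frobenius
compatibility `Δ (x*y) = x • Δ y = (Δ x) • y`, then the bilinear form `B(x,y) = ε (x*y)` is
nondegenerate — so `A` is a Frobenius algebra. -/
theorem counital_dialgebra_is_frobenius
    (k : Type*) [Field k] (A : Type*) [Ring A] [Algebra k A] [FiniteDimensional k A]
    (Δ : A →ₗ[k] A ⊗[k] A)
    (hΔ_coassoc : ∀ a : A,
      (TensorProduct.assoc k A A A) (TensorProduct.map Δ LinearMap.id (Δ a))
        = TensorProduct.map LinearMap.id Δ (Δ a))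
    (ε : A →ₗ[k] k)
    (hcounit_l : ∀ a : A, (TensorProduct.lid k A) (TensorProduct.map ε LinearMap.id (Δ a)) = a)
    (hcounit_r : ∀ a : A, (TensorProduct.rid k A) (TensorProduct.map LinearMap.id ε (Δ a)) = a)
    (hcompat_left : ∀ x y : A,
      Δ (x * y) = TensorProduct.map (LinearMap.mulLeft k x) LinearMap.id (Δ y))
    (hcompat_right : ∀ x y : A,
      Δ (x * y) = TensorProduct.map LinearMap.id (LinearMap.mulRight k y) (Δ x)) :
    (∀ x : A, (∀ y : A, ε (x * y) = 0) → x = 0) ∧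
    (∀ y : A, (∀ x : A, ε (x * y) = 0) → y = 0) :=
  counital_dialgebra_is_frobenius_general k A Δ ε hcounit_l hcounit_r hcompat_left hcompat_right
end

section
/- If δ : g → g⊗g gives g the structure of a Lie bialgebra, then the bracket on g ⊕ g* given by the bracket of g, the bracket on g* dual to δ, and the mixed bracket [x, ξ] := ad*_x ξ − ad*_ξ x makes the canonical symmetric form ⟨x+ξ, y+η⟩ = ξ(y) + η(x) invariant. -/
open TensorProduct

variable (k : Type*) [Field k] (g : Type*) [LieRing g] [LieAlgebra k g]

/-- The adjoint action of `x ∈ g` on `g ⊗ g`: `x • (a ⊗ b) = ⁅x,a⁆ ⊗ b + a ⊗ ⁅x,b⁆`. -/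
noncomputable def tensorAdjointAction (x : g) : g ⊗[k] g →ₗ[k] g ⊗[k] g :=
  TensorProduct.map (LieAlgebra.ad k g x) LinearMap.id
    + TensorProduct.map LinearMap.id (LieAlgebra.ad k g x)

/-- The cyclic permutation `(a ⊗ b) ⊗ c ↦ (c ⊗ a) ⊗ b` on `(g ⊗ g) ⊗ g`. -/
noncomputable def cyclicRotate : (g ⊗[k] g) ⊗[k] g →ₗ[k] (g ⊗[k] g) ⊗[k] g :=
  (TensorProduct.assoc k g g g).symm.toLinearMap
    ∘ₗ (TensorProduct.comm k (g ⊗[k] g) g).toLinearMap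

/-- The Lie bracket on `g*` dual to the cobracket `δ`: `[ξ, η] := (ξ ⊗ η) ∘ δ`. -/
noncomputable def dualBracket (δ : g →ₗ[k] g ⊗[k] g) (ξ η : Module.Dual k g) :
    Module.Dual k g :=
  (TensorProduct.lid k k).toLinearMap ∘ₗ TensorProduct.map ξ η ∘ₗ δ

/-- The coadjoint action of `x ∈ g` on `ξ ∈ g*`: `(ad*_x ξ) y = −ξ ⁅x, y⁆`. -/
noncomputable def coadAction (x : g) (ξ : Module.Dual k g) : Module.Dual k g :=
  -(ξ ∘ₗ (LieAlgebra.ad k g x : g →ₗ[k] g))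

/-- The coadjoint action of `ξ ∈ g*` on `x ∈ g ≅ g**` (for finite-dimensional `g`):
`η (ad*_ξ x) = −(ξ ⊗ η) (δ x)`, i.e. the coadjoint action of the Lie algebra `(g*, δ*)`
on its dual. -/
noncomputable def coadDualAction [FiniteDimensional k g] (δ : g →ₗ[k] g ⊗[k] g)
    (ξ : Module.Dual k g) (x : g) : g :=
  (Module.evalEquiv k g).symm
    (-(LinearMap.applyₗ (δ x) ∘ₗ
      (TensorProduct.dualDistrib k g g ∘ₗ
        TensorProduct.mk k (Module.Dual k g) (Module.Dual k g) ξ)))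

/-- The bracket of the Drinfeld double `D = g ⊕ g*`:
`[x+ξ, y+η] = ⁅x,y⁆ + ad*_ξ y − ad*_η x + [ξ,η]_* + ad*_x η − ad*_y ξ`. -/
noncomputable def doubleBracket [FiniteDimensional k g] (δ : g →ₗ[k] g ⊗[k] g)
    (u v : g × Module.Dual k g) : g × Module.Dual k g :=
  (⁅u.1, v.1⁆ + coadDualAction k g δ u.2 v.1 - coadDualAction k g δ v.2 u.1,
    dualBracket k g δ u.2 v.2 + coadAction k g u.1 v.2 - coadAction k g v.1 u.2)

/-- The canonical symmetric bilinear pairing on `D = g ⊕ g*`: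
`⟨x+ξ, y+η⟩ = ξ y + η x`. -/
noncomputable def doublePairing (u v : g × Module.Dual k g) : k :=
  u.2 v.1 + v.2 u.1


lemma coadAction_apply (x : g) (ξ : Module.Dual k g) (y : g) :
    coadAction k g x ξ y = -ξ ⁅x, y⁆ := by
  simp [coadAction, LieAlgebra.ad_apply]

lemma coadDualAction_eval [FiniteDimensional k g] (δ : g →ₗ[k] g ⊗[k] g)
    (ξ ζ : Module.Dual k g) (y : g) :
    ζ (coadDualAction k g δ ξ y)
      = -(TensorProduct.dualDistrib k g g (ξ ⊗ₜ ζ)) (δ y) := by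
  have h : ∀ a : g, ζ a = (Module.evalEquiv k g) a ζ := fun a => rfl
  rw [h, coadDualAction, LinearEquiv.apply_symm_apply]
  simp

lemma dualBracket_apply (δ : g →ₗ[k] g ⊗[k] g) (ξ η : Module.Dual k g) (z : g) :
    dualBracket k g δ ξ η z = TensorProduct.dualDistrib k g g (ξ ⊗ₜ η) (δ z) := by
  have h : ∀ t : g ⊗[k] g,
      (TensorProduct.lid k k) (TensorProduct.map ξ η t)
        = TensorProduct.dualDistrib k g g (ξ ⊗ₜ η) t := by
    intro t
    induction t using TensorProduct.induction_on with
    | zero => simp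
    | tmul a b => simp [smul_eq_mul]
    | add s t hs ht => simp [hs, ht]
  simpa [dualBracket] using h (δ z)

lemma dualDistrib_comm (ξ η : Module.Dual k g) (t : g ⊗[k] g) :
    TensorProduct.dualDistrib k g g (ξ ⊗ₜ η) ((TensorProduct.comm k g g) t)
      = TensorProduct.dualDistrib k g g (η ⊗ₜ ξ) t := by
  induction t using TensorProduct.induction_on with
  | zero => simp
  | tmul a b => simp [mul_comm]
  | add s t hs ht => simp [hs, ht]

/-- If `δ : g → g ⊗ g` gives the finite-dimensional Lie algebra `g` the
structure of a Lie bialgebra (skew, co-Jacobi, Drinfeld compatibility), then the double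
bracket on `D = g ⊕ g*` — built from the bracket of `g`, the bracket on `g*` dual to `δ`,
and the two coadjoint actions — leaves the canonical symmetric bilinear form
`⟨x+ξ, y+η⟩ = ξ y + η x` invariant: `⟨[u,v], w⟩ = ⟨u, [v,w]⟩` for all `u v w ∈ D`. -/
theorem double_bracket_pairing_invariant [FiniteDimensional k g]
    (δ : g →ₗ[k] g ⊗[k] g)
    (hskew : (TensorProduct.comm k g g).toLinearMap ∘ₗ δ = -δ)
    (hcojacobi :
      (TensorProduct.map δ LinearMap.id ∘ₗ δ)
        + cyclicRotate k g ∘ₗ (TensorProduct.map δ LinearMap.id ∘ₗ δ)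
        + cyclicRotate k g ∘ₗ cyclicRotate k g ∘ₗ (TensorProduct.map δ LinearMap.id ∘ₗ δ)
        = 0)
    (hcompat : ∀ x y : g,
      δ ⁅x, y⁆ = tensorAdjointAction k g x (δ y) - tensorAdjointAction k g y (δ x)) :
    ∀ u v w : g × Module.Dual k g,
      doublePairing k g (doubleBracket k g δ u v) w
        = doublePairing k g u (doubleBracket k g δ v w) := by
  have hsk : ∀ (z : g) (ξ η : Module.Dual k g),
      TensorProduct.dualDistrib k g g (η ⊗ₜ ξ) (δ z)
        = -TensorProduct.dualDistrib k g g (ξ ⊗ₜ η) (δ z) := by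
    intro z ξ η
    have h1 : (TensorProduct.comm k g g) (δ z) = -(δ z) := by
      have := congrArg (fun f => f z) hskew
      simpa using this
    calc TensorProduct.dualDistrib k g g (η ⊗ₜ ξ) (δ z)
        = TensorProduct.dualDistrib k g g (ξ ⊗ₜ η) ((TensorProduct.comm k g g) (δ z)) :=
          (dualDistrib_comm k g ξ η (δ z)).symm
      _ = -TensorProduct.dualDistrib k g g (ξ ⊗ₜ η) (δ z) := by rw [h1, map_neg]
  rintro ⟨x, ξ⟩ ⟨y, η⟩ ⟨z, ζ⟩
  simp only [doublePairing, doubleBracket, LinearMap.add_apply, LinearMap.sub_apply,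
    map_add, map_sub, coadAction_apply, coadDualAction_eval, dualBracket_apply]
  rw [hsk z ξ η, hsk y ζ ξ,
      show ⁅y, x⁆ = -⁅x, y⁆ from (lie_skew y x).symm,
      show ⁅z, x⁆ = -⁅x, z⁆ from (lie_skew z x).symm]
  simp only [map_neg]
  ring
end
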